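/- arXiv:2502.14054 — 2 statements merged into one kernel-verified Lean document; each statement's English description precedes it below -/
import Mathlib

section
/- Let D ≥ 1 and L ≥ 1 be integers, and for 1 ≤ j ≤ D set β_j = D·L / C(D,j) where C(D,j) is the binomial coefficient. Let M be the D×D real matrix whose first row has every entry equal to 1/β_1, whose subdiagonal entries are M_{j+1,j} = β_j/β_{j+1} for 1 ≤ j ≤ D−1, and all other entries zero. Then (D·L + 1)·M^D = (I + M)^D, where I is the D×D identity matrix. -/
open Matrix Finset

/-- β_j = D·L / C(D,j). -/
noncomputable def betaPIR (D L j : ℕ) : ℝ := (D * L : ℝ) / (D.choose j : ℝ)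

/-- The D×D matrix M: first row all 1/β₁, subdiagonal entries β_j/β_{j+1}, zeros elsewhere. -/
noncomputable def Mpir (D L : ℕ) : Matrix (Fin D) (Fin D) ℝ :=
  Matrix.of fun i j =>
    if i.val = 0 then 1 / betaPIR D L 1
    else if i.val = j.val + 1 then betaPIR D L (j.val + 1) / betaPIR D L (j.val + 2)
    else 0

/-!
`Mpir D L` is conjugate, by the diagonal matrix with entries `C(D, j + 1)`, to the companion matrix
of `X ^ D - ∑_{i < D} C(D, i) / (D L) X ^ i`. For a companion matrix the last basis vector is
cyclic, and its orbit gives the Cayley–Hamilton relation directly. Multiplied by `D L`, the relation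
supplies the lower binomial terms, so adding `M ^ D` yields `(1 + M) ^ D`.
-/

section Companion

variable {R : Type*} [CommRing R] {n : ℕ}

/-- The companion matrix of `X ^ n - ∑ i, a i * X ^ i`, acting on row vectors: row `0` is
`a ∘ Fin.rev` and row `i + 1` is the basis vector `e_i`. -/
def companion (a : Fin n → R) : Matrix (Fin n) (Fin n) R :=
  of fun i j => if (i : ℕ) = 0 then a j.rev else if (i : ℕ) = j + 1 then 1 else 0

lemma companion_row_zero (a : Fin (n + 1) → R) : companion a 0 = a ∘ Fin.rev := by
  ext j
  simp [companion]

lemma companion_row_succ (a : Fin (n + 1) → R) (i : Fin n) :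
    companion a i.succ = Pi.single i.castSucc 1 := by
  ext j
  simp only [companion, of_apply, Fin.val_succ, Nat.add_one_ne_zero, if_false,
    Nat.add_right_cancel_iff, Pi.single_apply, Fin.ext_iff, Fin.val_castSucc, eq_comm (a := (j : ℕ))]

lemma single_last_vecMul_companion_pow (a : Fin (n + 1) → R) (k : Fin (n + 1)) :
    Pi.single (Fin.last n) 1 ᵥ* companion a ^ (k : ℕ) = Pi.single k.rev 1 := by
  induction k using Fin.induction with
  | zero => simp
  | succ k ih =>
    rw [Fin.val_castSucc, Fin.rev_castSucc] at ih
    rw [Fin.val_succ, pow_succ, ← vecMul_vecMul, ih, single_one_vecMul, row, companion_row_succ,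
      Fin.rev_succ]

lemma single_last_vecMul_companion_pow_succ (a : Fin (n + 1) → R) :
    Pi.single (Fin.last n) 1 ᵥ* companion a ^ (n + 1) = a ∘ Fin.rev := by
  have h := single_last_vecMul_companion_pow a (Fin.last n)
  rw [Fin.val_last, Fin.rev_last] at h
  rw [pow_succ, ← vecMul_vecMul, h, single_one_vecMul, row, companion_row_zero]

lemma eq_zero_of_commute_companion {a : Fin (n + 1) → R} {P : Matrix (Fin (n + 1)) (Fin (n + 1)) R}
    (hP : Commute (companion a) P) (hlast : Pi.single (Fin.last n) 1 ᵥ* P = 0) : P = 0 := by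
  ext i j
  have hrow : Pi.single i 1 ᵥ* P = 0 := by
    rw [← Fin.rev_rev i, ← single_last_vecMul_companion_pow, vecMul_vecMul, (hP.pow_left _).eq,
      ← vecMul_vecMul, hlast, zero_vecMul]
  simpa using congrFun hrow j

theorem companion_pow_eq_sum (a : Fin (n + 1) → R) :
    companion a ^ (n + 1) = ∑ i, a i • companion a ^ (i : ℕ) := by
  rw [← sub_eq_zero]
  apply eq_zero_of_commute_companion
  · exact ((Commute.refl _).pow_right _).sub_right
      (Commute.sum_right _ _ _ fun i _ => ((Commute.refl _).pow_right _).smul_right _)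
  · rw [vecMul_sub, single_last_vecMul_companion_pow_succ, vecMul_sum, sub_eq_zero]
    simp_rw [vecMul_smul, single_last_vecMul_companion_pow]
    ext j
    simp [Finset.sum_apply, Pi.single_apply, eq_comm (a := j), Fin.rev_eq_iff]

end Companion

theorem pow_eq_sum_of_semiconjBy {R A ι : Type*} [CommSemiring R] [Semiring A] [Algebra R A]
    {S B C : A} (hS : IsUnit S) (h : SemiconjBy S B C) (s : Finset ι) (c : ι → R) (f : ι → ℕ)
    {m : ℕ} (hB : B ^ m = ∑ i ∈ s, c i • B ^ f i) : C ^ m = ∑ i ∈ s, c i • C ^ f i := by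
  apply hS.mul_left_injective
  simp only [Finset.sum_mul, smul_mul_assoc, ← (h.pow_right _).eq, hB, Finset.mul_sum,
    mul_smul_comm]

lemma Mpir_mul_diagonal_choose (D L : ℕ) (hL : L ≠ 0) :
    Mpir D L * diagonal (fun j : Fin D => (D.choose (j + 1) : ℝ)) =
      diagonal (fun j : Fin D => (D.choose (j + 1) : ℝ)) *
        companion (fun i => (D.choose i / (D * L) : ℝ)) := by
  ext i j
  have hD : D ≠ 0 := i.pos.ne'
  have hchoose : ∀ k ≤ D, (D.choose k : ℝ) ≠ 0 := fun k hk => by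
    exact_mod_cast (Nat.choose_pos hk).ne'
  rw [mul_diagonal, diagonal_mul]
  simp only [Mpir, companion, betaPIR, of_apply, Fin.val_rev]
  split_ifs with h0 hsub
  · rw [h0, zero_add, Nat.choose_one_right, Nat.choose_symm j.isLt]
    field_simp
  · rw [hsub, mul_one]
    have hj₁ := hchoose (j + 1) j.isLt
    have hj₂ := hchoose (j + 2) (by omega)
    field_simp
  · simp

theorem smul_Mpir_pow_eq_sum_choose (n L : ℕ) (hL : L ≠ 0) :
    ((n + 1 : ℕ) * L : ℝ) • Mpir (n + 1) L ^ (n + 1) =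
      ∑ i : Fin (n + 1), ((n + 1).choose i : ℝ) • Mpir (n + 1) L ^ (i : ℕ) := by
  have hunit : IsUnit (diagonal fun j : Fin (n + 1) => ((n + 1).choose (j + 1) : ℝ)) :=
    isUnit_diagonal.2 <| Pi.isUnit_iff.2 fun j =>
      isUnit_iff_ne_zero.2 <| by exact_mod_cast (Nat.choose_pos j.isLt).ne'
  rw [pow_eq_sum_of_semiconjBy hunit (Mpir_mul_diagonal_choose (n + 1) L hL).symm _ _ _
    (companion_pow_eq_sum _), Finset.smul_sum]
  refine Finset.sum_congr rfl fun i _ => ?_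
  rw [smul_smul]
  congr 1
  field_simp

theorem cayley_hamilton_identity_general (D L : ℕ) (hL : 1 ≤ L) :
    ((D * L + 1 : ℝ)) • (Mpir D L) ^ D = (1 + Mpir D L) ^ D := by
  cases D with
  | zero => exact Subsingleton.elim _ _
  | succ n =>
    rw [add_smul, one_smul, smul_Mpir_pow_eq_sum_choose n L (by omega), add_comm (1 : Matrix _ _ _),
      (Commute.one_right _).add_pow, Finset.sum_range_succ, ← Fin.sum_univ_eq_sum_range, add_comm]
    simp [Nat.cast_smul_eq_nsmul, nsmul_eq_mul, Nat.cast_comm]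

theorem cayley_hamilton_identity (D L : ℕ) (hD : 1 ≤ D) (hL : 1 ≤ L) :
    ((D * L + 1 : ℝ)) • (Mpir D L) ^ D = (1 + Mpir D L) ^ D :=
  cayley_hamilton_identity_general D L hL
end

section
/- Let D, L ≥ 1 and suppose D divides K with K ≥ D. With M the D×D matrix defined from β_j = D·L/C(D,j) as above (first row all 1/β_1, subdiagonal β_j/β_{j+1}, zeros elsewhere), and N = D·L + 1, it holds that (I + M)^{K−D} = N^{K/D − 1} · M^{K−D}. -/
/-!
Put `w_j = C(D, j+1) e_j` (`binomBasis D j`), so that `w_j = 0` for `j ≥ D`. Then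
`M w_j = C(D, j+1)/(DL) · w_0 + w_{j+1}`: on `w_0` the matrix `M` acts like a companion matrix,
and unrolling the recursion gives `DL · M^D w_0 = ∑_{k<D} C(D,k) M^k w_0`, i.e.
`P = (1 + M)^D - (DL + 1) M^D` kills `w_0`. As `P` commutes with `M` and each `w_{j+1}` is
`M w_j` minus a multiple of `w_0`, `P` kills every `w_j`, hence `P = 0`. Raising
`(1 + M)^D = (DL + 1) M^D` to the power `K/D - 1` gives the theorem.
-/

open Matrix Finset

namespace Matrix

variable {n R : Type*} [Fintype n] [CommRing R]
  {A : Matrix n n R} {w : ℕ → n → R} {c : ℕ → R}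

theorem pow_mulVec_eq_add_sum [DecidableEq n] (hw : ∀ j, A *ᵥ w j = c j • w 0 + w (j + 1))
    (j : ℕ) :
    A ^ j *ᵥ w 0 = w j + ∑ t ∈ range j, c (j - 1 - t) • (A ^ t *ᵥ w 0) := by
  induction j with
  | zero => simp
  | succ j ih =>
    rw [pow_succ', ← mulVec_mulVec, ih, mulVec_add, hw, mulVec_sum, sum_range_succ']
    simp only [mulVec_smul, mulVec_mulVec, ← pow_succ', pow_zero, one_mulVec,
      Nat.add_sub_cancel, Nat.sub_sub, Nat.sub_zero]
    ac_rfl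

theorem mulVec_eq_zero_of_commute (hw : ∀ j, A *ᵥ w j = c j • w 0 + w (j + 1))
    {P : Matrix n n R} (hP : Commute A P) (h0 : P *ᵥ w 0 = 0) (j : ℕ) : P *ᵥ w j = 0 := by
  induction j with
  | zero => exact h0
  | succ j ih =>
    rw [eq_sub_of_add_eq' (hw j).symm, mulVec_sub, mulVec_mulVec, ← hP.eq, ← mulVec_mulVec,
      ih, mulVec_smul, h0, mulVec_zero, smul_zero, sub_zero]

end Matrix

def binomBasis (D j : ℕ) : Fin D → ℝ :=
  fun i => if (i : ℕ) = j then (D.choose (j + 1) : ℝ) else 0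

theorem binomBasis_of_lt {D j : ℕ} (h : j < D) :
    binomBasis D j = (D.choose (j + 1) : ℝ) • Pi.single ⟨j, h⟩ 1 := by
  ext i
  simp [binomBasis, Pi.single_apply, Fin.ext_iff]

theorem binomBasis_of_le {D j : ℕ} (h : D ≤ j) : binomBasis D j = 0 := by
  ext i
  simp [binomBasis, (i.is_lt.trans_le h).ne]

theorem Mpir_mulVec_binomBasis {D L : ℕ} (hL : 0 < L) (j : ℕ) :
    Mpir D L *ᵥ binomBasis D j
      = ((D.choose (j + 1) : ℝ) / (D * L)) • binomBasis D 0 + binomBasis D (j + 1) := by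
  rcases lt_or_ge j D with hj | hj
  · ext i
    have hD : (D : ℝ) ≠ 0 := Nat.cast_ne_zero.2 i.pos.ne'
    have hL' : (L : ℝ) ≠ 0 := Nat.cast_ne_zero.2 hL.ne'
    have hC : (D.choose (j + 1) : ℝ) ≠ 0 := Nat.cast_ne_zero.2 (Nat.choose_pos hj).ne'
    rw [binomBasis_of_lt hj, mulVec_smul, mulVec_single_one]
    simp only [Pi.smul_apply, Pi.add_apply, col_apply, Mpir, of_apply, binomBasis, betaPIR,
      smul_eq_mul]
    by_cases h0 : (i : ℕ) = 0
    · simp only [h0, if_true, if_neg (Nat.succ_ne_zero j).symm, zero_add,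
        Nat.choose_one_right, add_zero]
      field_simp
    by_cases h1 : (i : ℕ) = j + 1
    · have hC' : (D.choose (j + 2) : ℝ) ≠ 0 :=
        Nat.cast_ne_zero.2 (Nat.choose_pos (by omega)).ne'
      simp only [h1, if_neg (Nat.succ_ne_zero j), if_true, mul_zero, zero_add]
      field_simp
    · simp [h0, h1]
  · rw [binomBasis_of_le hj, binomBasis_of_le (j := j + 1) (by omega), mulVec_zero,
      Nat.choose_eq_zero_of_lt (by omega)]
    simp

theorem one_add_Mpir_pow {D L : ℕ} (hD : 0 < D) (hL : 0 < L) :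
    (1 + Mpir D L) ^ D = ((D * L + 1 : ℝ)) • Mpir D L ^ D := by
  set M := Mpir D L
  have hw := Mpir_mulVec_binomBasis (D := D) hL
  have hbinom : (1 + M) ^ D = ∑ k ∈ range (D + 1), (D.choose k : ℝ) • M ^ k := by
    rw [add_comm, (Commute.one_right M).add_pow]
    refine sum_congr rfl fun k _ => ?_
    rw [one_pow, mul_one, Nat.cast_smul_eq_nsmul, nsmul_eq_mul']
  have hcayley : M ^ D *ᵥ binomBasis D 0
      = ∑ k ∈ range D, ((D.choose k : ℝ) / (D * L)) • (M ^ k *ᵥ binomBasis D 0) := by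
    rw [pow_mulVec_eq_add_sum hw, binomBasis_of_le le_rfl, zero_add]
    refine sum_congr rfl fun k hk => ?_
    have hkD := mem_range.1 hk
    rw [show D - 1 - k + 1 = D - k by omega, Nat.choose_symm hkD.le]
  have hcomm : Commute M ((1 + M) ^ D - (D * L + 1 : ℝ) • M ^ D) :=
    (((Commute.one_right M).add_right (Commute.refl M)).pow_right D).sub_right
      (((Commute.refl M).pow_right D).smul_right _)
  have h0 : ((1 + M) ^ D - (D * L + 1 : ℝ) • M ^ D) *ᵥ binomBasis D 0 = 0 := by
    have hDL : (D * L : ℝ) ≠ 0 := by positivity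
    simp only [sub_mulVec, hbinom, sum_mulVec, smul_mulVec]
    rw [sum_range_succ, Nat.choose_self, Nat.cast_one, one_smul, add_smul, one_smul,
      add_sub_add_right_eq_sub, hcayley, smul_sum, sub_eq_zero]
    refine sum_congr rfl fun k _ => ?_
    rw [smul_smul, mul_div_cancel₀ _ hDL]
  rw [← sub_eq_zero]
  refine ext_of_mulVec_single fun j => ?_
  have := mulVec_eq_zero_of_commute hw hcomm h0 j
  rw [binomBasis_of_lt j.is_lt, mulVec_smul, smul_eq_zero] at this
  rw [zero_mulVec]
  simpa [(Nat.choose_pos j.is_lt).ne'] using this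

theorem power_identity_general (D L K : ℕ) (hD : 1 ≤ D) (hL : 1 ≤ L) (hDK : D ∣ K) :
    (1 + Mpir D L) ^ (K - D) = ((D * L + 1 : ℝ)) ^ (K / D - 1) • (Mpir D L) ^ (K - D) := by
  obtain ⟨m, rfl⟩ := hDK
  rw [Nat.mul_div_cancel_left m hD, ← Nat.mul_sub_one, pow_mul, one_add_Mpir_pow hD hL,
    smul_pow, ← pow_mul]

theorem power_identity (D L K : ℕ) (hD : 1 ≤ D) (hL : 1 ≤ L) (hDK : D ∣ K) (hK : D ≤ K) :
    (1 + Mpir D L) ^ (K - D) = ((D * L + 1 : ℝ)) ^ (K / D - 1) • (Mpir D L) ^ (K - D) :=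
  power_identity_general D L K hD hL hDK
end
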